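/- arXiv:2201.13353 — 2 statements merged into one kernel-verified Lean document; each statement's English description precedes it below -/
import Mathlib

section
/- Let j ≥ 3 and 0 ≤ r ≤ j−3 be integers. Then the rational number Σ_{s=1}^{j−1} (−1)^s · (s/(j+1−s)) · binom(j+1−s, s−r) · C_{j−1−s} equals 0, where C_n is the n-th Catalan number and binom(a,b) = 0 when b < 0 or b > a. -/
/-!
Absorption and Pascal's rule turn `(j + 1 - r) · S_r` into `(j + 1 + r) T_{r+1} + r T_r`, where
`T_d = ∑_s (-1)^s binom(j - s, s - d) C_{j-1-s}`. For `1 ≤ d ≤ j - 2` the summand `F s` of `T_d` is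
hypergeometric in `s`, and Gosper's algorithm finds the certificate
`G s = 2 (s - d) (2 s - 2 j + 1) F s` with `G (s + 1) - G s = (j - d) (j - d - 1) F s`;
since `G` vanishes at `s = 0` and `s = j`, the sum `T_d` telescopes to zero.
-/

/-- The binomial coefficient `binom a b : ℚ` for integer arguments, equal to `0`
when `b < 0` or `b > a`. -/
def binom (a b : ℤ) : ℚ :=
  if 0 ≤ b ∧ b ≤ a then (a.toNat.choose b.toNat : ℚ) else 0

open Finset

lemma binom_of_neg {a b : ℤ} (hb : b < 0) : binom a b = 0 :=
  if_neg fun h => by omega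

lemma binom_of_lt {a b : ℤ} (hab : a < b) : binom a b = 0 :=
  if_neg fun h => by omega

lemma binom_natCast (n k : ℕ) : binom n k = n.choose k := by
  unfold binom
  split_ifs with h
  · simp
  · rw [Nat.choose_eq_zero_of_lt (by omega), Nat.cast_zero]

lemma mul_binom_sub_one_sub_one (a b : ℤ) : (a : ℚ) * binom (a - 1) (b - 1) = b * binom a b := by
  rcases lt_or_ge b 1 with hb | hb
  · obtain rfl | hb : b = 0 ∨ b < 0 := by omega
    · simp [binom_of_neg (show (-1 : ℤ) < 0 by omega)]
    · simp [binom_of_neg hb, binom_of_neg (show b - 1 < 0 by omega)]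
  rcases lt_or_ge a b with hab | hab
  · simp [binom_of_lt hab, binom_of_lt (show a - 1 < b - 1 by omega)]
  obtain ⟨k, rfl⟩ : ∃ k : ℕ, b = k + 1 := ⟨(b - 1).toNat, by omega⟩
  obtain ⟨n, rfl⟩ : ∃ n : ℕ, a = n + 1 := ⟨(a - 1).toNat, by omega⟩
  rw [add_sub_cancel_right, add_sub_cancel_right, ← Nat.cast_succ, ← Nat.cast_succ, binom_natCast,
    binom_natCast]
  exact_mod_cast (Nat.add_one_mul_choose_eq n k).trans (mul_comm _ _)

lemma mul_binom_sub_one (a b : ℤ) : (a : ℚ) * binom (a - 1) b = (a - b) * binom a b := by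
  rcases lt_or_ge b 0 with hb | hb
  · simp [binom_of_neg hb]
  rcases le_or_gt a b with hab | hab
  · rcases eq_or_lt_of_le hab with rfl | hab
    · simp [binom_of_lt (show a - 1 < a by omega)]
    · simp [binom_of_lt hab, binom_of_lt (show a - 1 < b by omega)]
  lift b to ℕ using hb
  obtain ⟨n, rfl⟩ : ∃ n : ℕ, a = n + 1 := ⟨(a - 1).toNat, by omega⟩
  rw [add_sub_cancel_right, ← Nat.cast_succ, binom_natCast, binom_natCast]
  have h := congrArg (Nat.cast : ℕ → ℚ) (Nat.choose_mul_succ_eq n b)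
  push_cast [show b ≤ n + 1 by omega] at h ⊢
  linear_combination h

lemma mul_binom_sub_one_add_one (a b : ℤ) :
    ((b : ℚ) + 1) * a * binom (a - 1) (b + 1) = (a - b - 1) * (a - b) * binom a b := by
  have h₁ := mul_binom_sub_one a (b + 1)
  have h₂ := mul_binom_sub_one_sub_one a (b + 1)
  have h₃ := mul_binom_sub_one a b
  push_cast at h₁ h₂
  rw [add_sub_cancel_right] at h₂
  linear_combination ((b : ℚ) + 1) * h₁ - (a - b - 1) * h₂ + (a - b - 1) * h₃

lemma catalan_succ_mul (n : ℕ) : (n + 2) * catalan (n + 1) = 2 * (2 * n + 1) * catalan n := by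
  refine Nat.eq_of_mul_eq_mul_left n.succ_pos ?_
  calc (n + 1) * ((n + 2) * catalan (n + 1)) = (n + 1) * (n + 1).centralBinom := by
        rw [← succ_mul_catalan_eq_centralBinom]
    _ = 2 * (2 * n + 1) * ((n + 1) * catalan n) := by
        rw [Nat.succ_mul_centralBinom_succ, succ_mul_catalan_eq_centralBinom]
    _ = (n + 1) * (2 * (2 * n + 1) * catalan n) := by ring

def catalanTerm (j d s : ℕ) : ℚ :=
  (-1) ^ s * binom ((j : ℤ) - s) ((s : ℤ) - d) * catalan (j - 1 - s)

lemma catalanTerm_of_lt {j d s : ℕ} (h : s < d) : catalanTerm j d s = 0 := by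
  rw [catalanTerm, binom_of_neg (by omega), mul_zero, zero_mul]

lemma catalanTerm_self {j d : ℕ} (h : d < j) : catalanTerm j d j = 0 := by
  rw [catalanTerm, binom_of_lt (by omega), mul_zero, zero_mul]

lemma catalanTerm_succ {j d s : ℕ} (hs : s < j) (hd : d < j) :
    2 * ((s : ℚ) + 1 - d) * (2 * s + 3 - 2 * j) * catalanTerm j d (s + 1) =
      ((j : ℚ) + d - 2 * s) * (j + d - 2 * s - 1) * catalanTerm j d s := by
  obtain rfl | hs := eq_or_lt_of_le (Nat.succ_le_of_lt hs)
  · -- `s = j - 1`: no Catalan recurrence is available, but both sides vanish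
    have h : ((d : ℚ) - s) * (d - s + 1) * binom 1 ((s : ℤ) - d) = 0 := by
      obtain h | h | h : (s : ℤ) - d = 0 ∨ (s : ℤ) - d = 1 ∨ 1 < (s : ℤ) - d := by omega
      · simp [show (s : ℚ) = d by exact_mod_cast (show (s : ℤ) = d by omega)]
      · simp [show (s : ℚ) = d + 1 by exact_mod_cast (show (s : ℤ) = d + 1 by omega)]
      · rw [binom_of_lt h, mul_zero]
    rw [catalanTerm_self hd, catalanTerm, show ((s + 1 : ℕ) : ℤ) - s = 1 by push_cast; ring,
      show s + 1 - 1 - s = 0 by omega, catalan_zero]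
    push_cast
    linear_combination -(-1) ^ s * h
  obtain ⟨n, rfl⟩ : ∃ n, j = s + n + 2 := ⟨j - s - 2, by omega⟩
  have hB := mul_binom_sub_one_add_one ((n : ℤ) + 2) ((s : ℤ) - d)
  have hC : ((n : ℚ) + 2) * catalan (n + 1) = 2 * (2 * n + 1) * catalan n := by
    exact_mod_cast catalan_succ_mul n
  simp only [catalanTerm, show s + n + 2 - 1 - s = n + 1 by omega,
    show s + n + 2 - 1 - (s + 1) = n by omega,
    show ((s + n + 2 : ℕ) : ℤ) - s = n + 2 by push_cast; ring,
    show ((s + n + 2 : ℕ) : ℤ) - (s + 1 : ℕ) = n + 2 - 1 by push_cast; ring,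
    show ((s + 1 : ℕ) : ℤ) - d = s - d + 1 by push_cast; ring]
  push_cast at hB ⊢
  rw [pow_succ]
  linear_combination (-1) ^ s * (catalan (n + 1) : ℚ) * hB -
    (-1) ^ s * ((s : ℚ) + 1 - d) * binom ((n : ℤ) + 2 - 1) ((s : ℤ) - d + 1) * hC

lemma sum_catalanTerm_eq_zero {j d : ℕ} (hd : 1 ≤ d) (hdj : d + 2 ≤ j) :
    ∑ s ∈ Icc 1 (j - 1), catalanTerm j d s = 0 := by
  set G : ℕ → ℚ := fun s => 2 * ((s : ℚ) - d) * (2 * s - 2 * j + 1) * catalanTerm j d s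
  have hstep : ∀ s ∈ range j,
      G (s + 1) - G s = ((j : ℚ) - d) * (j - d - 1) * catalanTerm j d s := by
    intro s hs
    have := catalanTerm_succ (mem_range.1 hs) (by omega : d < j)
    simp only [G]
    push_cast
    linear_combination this
  have htel : ((j : ℚ) - d) * (j - d - 1) * ∑ s ∈ range j, catalanTerm j d s = 0 := by
    rw [mul_sum, ← sum_congr rfl hstep, sum_range_sub]
    simp [G, catalanTerm_self (by omega : d < j), catalanTerm_of_lt (by omega : 0 < d)]
  have hrange : ∑ s ∈ range j, catalanTerm j d s = ∑ s ∈ Icc 1 (j - 1), catalanTerm j d s := by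
    obtain ⟨m, rfl⟩ : ∃ m, j = m + 1 := ⟨j - 1, by omega⟩
    rw [range_eq_Ico, sum_eq_sum_Ico_succ_bot (by omega : 0 < m + 1), catalanTerm_of_lt hd,
      zero_add, zero_add, Ico_add_one_right_eq_Icc, Nat.add_sub_cancel]
  have hdj' : (d : ℚ) + 2 ≤ j := by exact_mod_cast hdj
  rw [← hrange]
  exact (mul_eq_zero.1 htel).resolve_left (mul_pos (by linarith) (by linarith)).ne'

lemma add_mul_add_div_mul_binom {a : ℤ} (ha : a ≠ 0) (b : ℤ) (r : ℚ) :
    ((a : ℚ) + b) * ((b + r) / a * binom a b) =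
      (a + b + 2 * r) * binom (a - 1) (b - 1) + r * binom (a - 1) b := by
  have h₁ := mul_binom_sub_one_sub_one a b
  have h₂ := mul_binom_sub_one a b
  have ha' : (a : ℚ) ≠ 0 := by exact_mod_cast ha
  field_simp
  linear_combination (-(a : ℚ) - b - 2 * r) * h₁ - r * h₂

/-- For `j ≥ 3` and `0 ≤ r ≤ j−3`, the sum
`Σ_{s=1}^{j−1} (−1)^s·(s/(j+1−s))·binom(j+1−s, s−r)·C_{j−1−s}` vanishes. -/
theorem S_r_vanishes (j r : ℕ) (hj : 3 ≤ j) (hr : r ≤ j - 3) :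
    ∑ s ∈ Finset.Icc 1 (j - 1),
      (-1 : ℚ) ^ s * ((s : ℚ) / ((j : ℚ) + 1 - s)) *
        binom ((j : ℤ) + 1 - s) ((s : ℤ) - r) * catalan (j - 1 - s) = 0 := by
  have hrj : r + 3 ≤ j := by omega
  have hsummand : ∀ s ∈ Icc 1 (j - 1),
      ((j : ℚ) + 1 - r) * ((-1 : ℚ) ^ s * ((s : ℚ) / ((j : ℚ) + 1 - s)) *
        binom ((j : ℤ) + 1 - s) ((s : ℤ) - r) * catalan (j - 1 - s)) =
      ((j : ℚ) + 1 + r) * catalanTerm j (r + 1) s + r * catalanTerm j r s := by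
    intro s hs
    have hsj := (mem_Icc.1 hs).2
    have key := add_mul_add_div_mul_binom (a := (j : ℤ) + 1 - s) (by omega) ((s : ℤ) - r) r
    rw [show (j : ℤ) + 1 - s - 1 = j - s by ring,
      show (s : ℤ) - r - 1 = s - (r + 1 : ℕ) by push_cast; ring] at key
    push_cast at key
    simp only [catalanTerm]
    push_cast
    linear_combination (-1) ^ s * (catalan (j - 1 - s) : ℚ) * key
  have hrj' : (r : ℚ) + 3 ≤ j := by exact_mod_cast hrj
  refine (mul_eq_zero.1 ?_).resolve_left (show ((j : ℚ) + 1 - r) ≠ 0 by linarith)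
  rw [mul_sum, sum_congr rfl hsummand, sum_add_distrib, ← mul_sum, ← mul_sum,
    sum_catalanTerm_eq_zero (by omega) (by omega), mul_zero, zero_add]
  rcases Nat.eq_zero_or_pos r with rfl | hr₀
  · simp
  · rw [sum_catalanTerm_eq_zero hr₀ (by omega), mul_zero]
end

section
/- For every integer n ≥ 1, the determinant of the n×n matrix M with entries M_{i,j} = binom(i+1, j−i+1) for 1 ≤ i, j ≤ n (with binom(a,b) = 0 when b < 0 or b > a) equals the Catalan number C_{n+1} = binom(2n+2, n+1)/(n+2). -/
lemma binom_neg {a b : ℤ} (h : b < 0) : binom a b = 0 := by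
  unfold binom; rw [if_neg]; omega

lemma binom_natCast_s11 (a b : ℕ) : binom (a : ℤ) (b : ℤ) = (a.choose b : ℚ) := by
  unfold binom
  split
  · simp
  · next h =>
    have : a < b := by omega
    rw [Nat.choose_eq_zero_of_lt this, Nat.cast_zero]

def cq (i : ℕ) : ℚ := catalan i

lemma catalan_ne (i : ℕ) : catalan i ≠ 0 := by
  have h := succ_mul_catalan_eq_centralBinom i
  have := Nat.centralBinom_pos i
  intro hc
  rw [hc, Nat.mul_zero] at h
  omega

lemma cq_ne (i : ℕ) : cq i ≠ 0 := by
  unfold cq; exact_mod_cast catalan_ne i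

lemma cat_choose (i : ℕ) : (i+2) * catalan (i+2) = (2*i+4).choose (i+1) := by
  have h1 : (i+3) * catalan (i+2) = (2*i+4).choose (i+2) := by
    have := succ_mul_catalan_eq_centralBinom (i+2)
    rwa [Nat.centralBinom, show 2*(i+2) = 2*i+4 by ring] at this
  have h2 : (2*i+4).choose (i+2) * (i+2) = (2*i+4).choose (i+1) * (2*i+4 - (i+1)) :=
    Nat.choose_succ_right_eq (2*i+4) (i+1)
  have h3 : 2*i+4 - (i+1) = i+3 := by omega
  rw [h3] at h2
  apply Nat.eq_of_mul_eq_mul_right (show 0 < i+3 by omega)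
  calc (i+2) * catalan (i+2) * (i+3) = (i+3) * catalan (i+2) * (i+2) := by ring
  _ = (2*i+4).choose (i+2) * (i+2) := by rw [h1]
  _ = (2*i+4).choose (i+1) * (i+3) := h2

lemma cat_chooseQ (i : ℕ) : ((2*i+4).choose (i+1) : ℚ) = ((i:ℚ)+2) * cq (i+2) := by
  unfold cq
  rw [← cat_choose i]
  push_cast
  ring

lemma cat_chooseQ' (i : ℕ) : ((2*i+4).choose (i+2) : ℚ) = ((i:ℚ)+3) * cq (i+2) := by
  unfold cq
  have h1 : (i+3) * catalan (i+2) = (2*i+4).choose (i+2) := by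
    have := succ_mul_catalan_eq_centralBinom (i+2)
    rwa [Nat.centralBinom, show 2*(i+2) = 2*i+4 by ring] at this
  rw [← h1]; push_cast; ring

def Uent (i j : ℕ) : ℚ :=
  binom (2*(i:ℤ)+4) (2*(i:ℤ)+1 - (j:ℤ)) * binom ((j:ℤ)+1) ((i:ℤ)+1) /
    (((i:ℚ)+2) * cq (i+1))

lemma Uent_eq (i j : ℕ) (h : j ≤ 2*i+1) :
    Uent i j = ((2*i+4).choose (2*i+1-j) : ℚ) * ((j+1).choose (i+1) : ℚ) /
      (((i:ℚ)+2) * cq (i+1)) := by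
  unfold Uent
  rw [show (2*(i:ℤ)+1 - (j:ℤ)) = ((2*i+1-j : ℕ) : ℤ) by omega,
    show (2*(i:ℤ)+4) = ((2*i+4 : ℕ) : ℤ) by push_cast; ring,
    show ((j:ℤ)+1) = ((j+1:ℕ):ℤ) by push_cast; ring,
    show ((i:ℤ)+1) = ((i+1:ℕ):ℤ) by push_cast; ring,
    binom_natCast_s11, binom_natCast_s11]

lemma Uent_zero (i j : ℕ) (h : 2*i+1 < j) : Uent i j = 0 := by
  unfold Uent
  rw [binom_neg (by omega), zero_mul, zero_div]

lemma Uent_lt (i j : ℕ) (h : j < i) : Uent i j = 0 := by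
  unfold Uent
  rw [show ((j:ℤ)+1) = ((j+1:ℕ):ℤ) by push_cast; ring,
    show ((i:ℤ)+1) = ((i+1:ℕ):ℤ) by push_cast; ring, binom_natCast_s11,
    Nat.choose_eq_zero_of_lt (by omega), Nat.cast_zero, mul_zero, zero_div]

lemma Uent_diag (i : ℕ) : Uent i i = cq (i+2) / cq (i+1) := by
  rw [Uent_eq i i (by omega), show 2*i+1-i = i+1 by omega, Nat.choose_self,
    cat_chooseQ]
  have h2 : ((i:ℚ)+2) ≠ 0 := by positivity
  rw [div_eq_div_iff (mul_ne_zero (by positivity) (cq_ne (i+1))) (cq_ne (i+1))]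
  push_cast
  ring

lemma gen_id (p t : ℕ) :
    ((p:ℚ)+t+2) * ((2*p+2*t+4).choose (p+t+2) : ℚ) * ((p+t+3).choose (p+1) : ℚ) =
    ((p:ℚ)+t+2) * ((2*p+2*t+6).choose (t+2) : ℚ) * ((2*p+t+2).choose (p+t+2) : ℚ) +
    ((p:ℚ)+t+3) * ((2*p+2*t+4).choose t : ℚ) * ((2*p+t+2).choose (p+t+1) : ℚ) := by
  rw [Nat.cast_choose ℚ (show p+t+2 ≤ 2*p+2*t+4 by omega),
      Nat.cast_choose ℚ (show p+1 ≤ p+t+3 by omega),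
      Nat.cast_choose ℚ (show t+2 ≤ 2*p+2*t+6 by omega),
      Nat.cast_choose ℚ (show p+t+2 ≤ 2*p+t+2 by omega),
      Nat.cast_choose ℚ (show t ≤ 2*p+2*t+4 by omega),
      Nat.cast_choose ℚ (show p+t+1 ≤ 2*p+t+2 by omega),
      show 2*p+2*t+4 - (p+t+2) = p+t+2 by omega,
      show p+t+3 - (p+1) = t+2 by omega,
      show 2*p+2*t+6 - (t+2) = 2*p+t+4 by omega,
      show 2*p+t+2 - (p+t+2) = p by omega,
      show 2*p+2*t+4 - t = 2*p+t+4 by omega,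
      show 2*p+t+2 - (p+t+1) = p+1 by omega]
  have e1 : ((2*p+2*t+6).factorial : ℚ) = (2*(p:ℚ)+2*t+6)*(2*(p:ℚ)+2*t+5)*((2*p+2*t+4).factorial : ℚ) := by
    rw [show 2*p+2*t+6 = (2*p+2*t+4)+1+1 by omega, Nat.factorial_succ, Nat.factorial_succ]
    push_cast; ring
  have e2 : ((p+t+3).factorial : ℚ) = ((p:ℚ)+t+3)*((p:ℚ)+t+2)*((p+t+1).factorial : ℚ) := by
    rw [show p+t+3 = (p+t+1)+1+1 by omega, Nat.factorial_succ, Nat.factorial_succ]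
    push_cast; ring
  have e3 : ((p+t+2).factorial : ℚ) = ((p:ℚ)+t+2)*((p+t+1).factorial : ℚ) := by
    rw [show p+t+2 = (p+t+1)+1 by omega, Nat.factorial_succ]
    push_cast; ring
  have e4 : ((t+2).factorial : ℚ) = ((t:ℚ)+2)*((t:ℚ)+1)*((t).factorial : ℚ) := by
    rw [show t+2 = t+1+1 by omega, Nat.factorial_succ, Nat.factorial_succ]
    push_cast; ring
  have e5 : ((2*p+t+4).factorial : ℚ) = (2*(p:ℚ)+t+4)*(2*(p:ℚ)+t+3)*((2*p+t+2).factorial : ℚ) := by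
    rw [show 2*p+t+4 = (2*p+t+2)+1+1 by omega, Nat.factorial_succ, Nat.factorial_succ]
    push_cast; ring
  have e6 : ((p+1).factorial : ℚ) = ((p:ℚ)+1)*((p).factorial : ℚ) := by
    rw [Nat.factorial_succ]; push_cast; ring
  rw [e1, e2, e3, e4, e5, e6]
  have f1 : ((2*p+2*t+4).factorial : ℚ) ≠ 0 := by exact_mod_cast (Nat.factorial_pos _).ne'
  have f2 : ((2*p+t+2).factorial : ℚ) ≠ 0 := by exact_mod_cast (Nat.factorial_pos _).ne'
  have f3 : ((p+t+1).factorial : ℚ) ≠ 0 := by exact_mod_cast (Nat.factorial_pos _).ne'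
  have f4 : ((p).factorial : ℚ) ≠ 0 := by exact_mod_cast (Nat.factorial_pos _).ne'
  have f5 : ((t).factorial : ℚ) ≠ 0 := by exact_mod_cast (Nat.factorial_pos _).ne'
  have g1 : ((p:ℚ)+t+2) ≠ 0 := by positivity
  have g2 : ((t:ℚ)+2) ≠ 0 := by positivity
  have g3 : ((t:ℚ)+1) ≠ 0 := by positivity
  have g4 : ((p:ℚ)+1) ≠ 0 := by positivity
  have g5 : (2*(p:ℚ)+t+4) ≠ 0 := by positivity
  have g6 : (2*(p:ℚ)+t+3) ≠ 0 := by positivity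
  field_simp
  ring

lemma choose_double (i : ℕ) : (2*i+4).choose (i+2) = 2 * ((2*i+3).choose (i+2)) := by
  have hp : (2*i+4).choose (i+2) = (2*i+3).choose (i+1) + (2*i+3).choose (i+2) := by
    rw [show 2*i+4 = (2*i+3)+1 by omega, show i+2 = (i+1)+1 by omega]
    exact Nat.choose_succ_succ' (2*i+3) (i+1)
  have hs : (2*i+3).choose (i+1) = (2*i+3).choose (i+2) := by
    have := Nat.choose_symm (show i+1 ≤ 2*i+3 by omega)
    rw [show 2*i+3 - (i+1) = i+2 by omega] at this
    exact this.symm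
  omega

lemma key (i j : ℕ) :
    binom ((i:ℤ)+3) ((j:ℤ) - (i:ℤ)) = Uent (i+1) j + cq (i+1) / cq (i+2) * Uent i j := by
  rcases lt_or_ge j i with h | h
  · rw [binom_neg (by omega), Uent_lt (i+1) j (by omega), Uent_lt i j h]
    ring
  obtain ⟨m, rfl⟩ : ∃ m, j = i + m := ⟨j - i, by omega⟩
  have hL : binom ((i:ℤ)+3) (((i+m : ℕ):ℤ) - (i:ℤ)) = ((i+3).choose m : ℚ) := by
    rw [show ((i:ℤ)+3) = ((i+3:ℕ):ℤ) by push_cast; ring,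
      show (((i+m : ℕ):ℤ) - (i:ℤ)) = ((m:ℕ):ℤ) by push_cast; ring, binom_natCast_s11]
  rw [hL]
  rcases Nat.lt_or_ge m (i+2) with hm | hm
  · rcases m with _ | p
    · -- m = 0
      simp only [Nat.add_zero]
      rw [Uent_lt (i+1) i (by omega), Uent_diag]
      rw [Nat.choose_zero_right]
      rw [div_mul_div_comm, mul_comm (cq (i+1)), div_self (by
        exact mul_ne_zero (cq_ne (i+2)) (cq_ne (i+1)))]
      norm_num
    · -- m = p+1, p+1 < i+2 so p ≤ i
      obtain ⟨t, rfl⟩ : ∃ t, i = p + t := ⟨i - p, by omega⟩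
      rw [Uent_eq (p+t+1) (p+t+(p+1)) (by omega), Uent_eq (p+t) (p+t+(p+1)) (by omega),
        show 2*(p+t+1)+1 - (p+t+(p+1)) = t+2 by omega,
        show 2*(p+t)+1 - (p+t+(p+1)) = t by omega,
        show 2*(p+t+1)+4 = 2*p+2*t+6 by ring,
        show (p+t+(p+1))+1 = 2*p+t+2 by ring,
        show (p+t+1)+1 = p+t+2 by ring,
        show 2*(p+t)+4 = 2*p+2*t+4 by ring,
        show (p+t)+1 = p+t+1 by ring,
        show (p+t+3).choose (p+1) = (p+t+3).choose (p+1) from rfl]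
      have hcc : ((2*p+2*t+4).choose (p+t+2) : ℚ) = ((p:ℚ)+t+3) * cq (p+t+2) := by
        have := cat_chooseQ' (p+t)
        rw [show 2*(p+t)+4 = 2*p+2*t+4 by ring, show (p+t)+2 = p+t+2 by ring] at this
        rw [this]
        push_cast
        ring
      have hgen := gen_id p t
      rw [hcc] at hgen
      have h1 : ((p:ℚ)+t+3) ≠ 0 := by positivity
      have h2 : ((p:ℚ)+t+2) ≠ 0 := by positivity
      have hq1 := cq_ne (p+t+1)
      have hq2 := cq_ne (p+t+2)
      push_cast
      rw [show ((p:ℚ)+(t:ℚ)+1+2) = (p:ℚ)+t+3 by ring]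
      rw [div_mul_div_comm, div_add_div _ _ (mul_ne_zero h1 hq2)
        (mul_ne_zero hq2 (mul_ne_zero h2 hq1)),
        eq_div_iff (mul_ne_zero (mul_ne_zero h1 hq2)
          (mul_ne_zero hq2 (mul_ne_zero h2 hq1)))]
      linear_combination (cq (p+t+1) * cq (p+t+2)) * hgen
  · have : m = i+2 ∨ m = i+3 ∨ i+4 ≤ m := by omega
    rcases this with rfl | rfl | hm4
    · -- m = i+2
      rw [Uent_zero i (i+(i+2)) (by omega), mul_zero, add_zero,
        Uent_eq (i+1) (i+(i+2)) (by omega),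
        show 2*(i+1)+1 - (i+(i+2)) = 1 by omega,
        show 2*(i+1)+4 = 2*i+6 by ring,
        show (i+(i+2))+1 = 2*i+3 by ring,
        show (i+1)+1 = i+2 by ring,
        Nat.choose_one_right,
        show (i+3).choose (i+2) = i+3 by
          rw [show i+3 = (i+2)+1 by omega]; exact Nat.choose_succ_self_right (i+2)]
      have hd : ((2*i+3).choose (i+2) : ℚ) = ((2*i+4).choose (i+2) : ℚ) / 2 := by
        rw [choose_double]; push_cast; ring
      rw [hd, cat_chooseQ']
      have h1 : ((i:ℚ)+3) ≠ 0 := by positivity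
      have h2 : (((i+1):ℕ):ℚ) ≠ 0 := by positivity
      have hcq := cq_ne (i+2)
      push_cast
      field_simp
      ring
    · -- m = i+3
      rw [Uent_zero i (i+(i+3)) (by omega), mul_zero, add_zero,
        Uent_eq (i+1) (i+(i+3)) (by omega),
        show 2*(i+1)+1 - (i+(i+3)) = 0 by omega,
        show 2*(i+1)+4 = 2*i+6 by ring,
        show (i+(i+3))+1 = 2*i+4 by ring,
        show (i+1)+1 = i+2 by ring,
        Nat.choose_zero_right, Nat.choose_self, cat_chooseQ']
      have h1 : ((i:ℚ)+3) ≠ 0 := by positivity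
      have hcq := cq_ne (i+2)
      push_cast
      rw [show ((i:ℚ)+1+2) = (i:ℚ)+3 by ring, one_mul,
        div_self (mul_ne_zero h1 hcq)]
    · rw [Uent_zero (i+1) (i+m) (by omega), Uent_zero i (i+m) (by omega),
        Nat.choose_eq_zero_of_lt (by omega)]
      push_cast
      ring

lemma key0 (j : ℕ) : binom 2 ((j:ℤ)+1) = Uent 0 j := by
  rcases j with _ | _ | j
  · rw [show ((0:ℕ):ℤ)+1 = ((1:ℕ):ℤ) by norm_num, show (2:ℤ) = ((2:ℕ):ℤ) by norm_num,
      binom_natCast_s11, Uent_eq 0 0 (by omega)]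
    norm_num [cq, catalan_one]
  · rw [show ((1:ℕ):ℤ)+1 = ((2:ℕ):ℤ) by norm_num, show (2:ℤ) = ((2:ℕ):ℤ) by norm_num,
      binom_natCast_s11, Uent_eq 0 1 (by omega)]
    simp [cq, catalan_one]
  · rw [Uent_zero 0 (j+2) (by omega), show (2:ℤ) = ((2:ℕ):ℤ) by norm_num,
      show ((j+2:ℕ):ℤ)+1 = ((j+3:ℕ):ℤ) by push_cast; ring, binom_natCast_s11,
      Nat.choose_eq_zero_of_lt (by omega), Nat.cast_zero]

lemma tele : ∀ M : ℕ, ∏ i ∈ Finset.range M, (cq (i+2) / cq (i+1)) = cq (M+1) := by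
  intro M
  induction M with
  | zero => simp [cq, catalan_one]
  | succ M ih =>
    rw [Finset.prod_range_succ, ih, mul_comm, div_mul_cancel₀ _ (cq_ne (M+1))]

/-- For `n ≥ 1`, the determinant of the `n×n` Pascal matrix with entries
`M_{i,j} = binom(i+1, j−i+1)` (indices `1 ≤ i, j ≤ n`) equals the Catalan number
`C_{n+1}`. -/
theorem pascal_det (n : ℕ) (hn : 1 ≤ n) :
    Matrix.det (Matrix.of fun i j : Fin n =>
        binom ((i : ℤ) + 2) ((j : ℤ) - (i : ℤ) + 1)) =
      (catalan (n + 1) : ℚ) := by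
  obtain ⟨N, rfl⟩ : ∃ N, n = N + 1 := ⟨n - 1, by omega⟩
  set A : Matrix (Fin (N+1)) (Fin (N+1)) ℚ :=
    Matrix.of fun i j : Fin (N+1) => binom ((i : ℤ) + 2) ((j : ℤ) - (i : ℤ) + 1) with hA
  set L : Matrix (Fin (N+1)) (Fin (N+1)) ℚ :=
    Matrix.of fun i k : Fin (N+1) =>
      (if i = k then (1:ℚ) else 0) +
      (if (k:ℕ)+1 = (i:ℕ) then cq (i:ℕ) / cq ((i:ℕ)+1) else 0) with hLdef
  set B : Matrix (Fin (N+1)) (Fin (N+1)) ℚ :=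
    Matrix.of fun i j : Fin (N+1) => Uent (i:ℕ) (j:ℕ) with hBdef
  have hAB : A = L * B := by
    ext i j
    rw [Matrix.mul_apply]
    simp only [hLdef, hBdef, hA, Matrix.of_apply, add_mul, ite_mul, one_mul, zero_mul]
    rw [Finset.sum_add_distrib, Finset.sum_ite_eq, if_pos (Finset.mem_univ i)]
    rcases hiv : (i : ℕ) with _ | m
    · have hz : ∀ k : Fin (N+1),
          (if (k:ℕ)+1 = 0 then cq 0 / cq (0+1) * Uent (k:ℕ) (j:ℕ) else 0) = 0 := by
        intro k; rw [if_neg (by omega)]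
      rw [Finset.sum_congr rfl (fun k _ => hz k), Finset.sum_const_zero, add_zero]
      have := key0 (j:ℕ)
      rw [← this]
      norm_num
    · have hmN : m < N+1 := by have := i.isLt; omega
      set k₀ : Fin (N+1) := ⟨m, hmN⟩ with hk₀
      have hcond : ∀ k : Fin (N+1),
          (if (k:ℕ)+1 = m+1 then cq (m+1) / cq (m+1+1) * Uent (k:ℕ) (j:ℕ) else 0) =
          (if k = k₀ then cq (m+1) / cq (m+1+1) * Uent (k:ℕ) (j:ℕ) else 0) := by
        intro k
        refine if_congr ?_ rfl rfl
        rw [Fin.ext_iff, hk₀]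
        simp only []
        omega
      rw [Finset.sum_congr rfl (fun k _ => hcond k), Finset.sum_ite_eq',
        if_pos (Finset.mem_univ k₀)]
      have hkey := key m (j:ℕ)
      rw [show (((m+1:ℕ):ℤ)+2) = (m:ℤ)+3 by push_cast; ring,
        show (((j:Fin (N+1)):ℤ) - ((m+1:ℕ):ℤ) + 1) = ((j:ℕ):ℤ) - (m:ℤ) by push_cast; ring,
        hkey]
  have hdetL : L.det = 1 := by
    rw [Matrix.det_of_lowerTriangular L (by
      intro i j hij
      have hij' : i < j := hij
      simp only [hLdef, Matrix.of_apply]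
      rw [if_neg (Fin.ne_of_lt hij'), if_neg (by
        have := Fin.lt_iff_val_lt_val.mp hij'
        omega)]
      ring)]
    apply Finset.prod_eq_one
    intro i _
    simp only [hLdef, Matrix.of_apply]
    have hne : ¬((i:ℕ)+1 = (i:ℕ)) := by omega
    simp [hne]
  have hdetB : B.det = ∏ i : Fin (N+1), (cq ((i:ℕ)+2) / cq ((i:ℕ)+1)) := by
    rw [Matrix.det_of_upperTriangular (by
      intro i j hij
      have hij' : j < i := hij
      simp only [hBdef, Matrix.of_apply]
      exact Uent_lt _ _ (Fin.lt_iff_val_lt_val.mp hij'))]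
    apply Finset.prod_congr rfl
    intro i _
    simp only [hBdef, Matrix.of_apply]
    exact Uent_diag (i:ℕ)
  rw [hAB, Matrix.det_mul, hdetL, hdetB, one_mul]
  rw [Fin.prod_univ_eq_prod_range (fun i => cq (i+2) / cq (i+1)) (N+1), tele (N+1)]
  unfold cq
  norm_num
end
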